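/- Let 0 < q < 1, p > 1, and α > 0. For every nonnegative function f on (0,∞), the series inequality (1-q)^{p+1} Γ_q(α)^{-p} ∑_{j∈ℤ} q^{j(1-p)} (∑_{i=j}^∞ (q^{i-j+1};q)_{α-1} f(q^i) q^i)^p ≤ (Γ_q(1-1/p)/Γ_q(α+1-1/p))^p (1-q) ∑_{i∈ℤ} q^i f(q^i)^p holds; equivalently ∫_0^∞ (x^{-α} I_q^α f(x))^p d_q x ≤ (Γ_q(1-1/p)/Γ_q(α+1-1/p))^p ∫_0^∞ f^p d_q t. -/

import Mathlib

/-!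
With `a m = (q^(m+1);q)_(α-1) q^(m(1-1/p))` and `u i = q^(i/p) f(q^i)`, the left-hand side is,
up to its constant, `∑ j, (∑ m, a m * u (j + m))^p`: the `p`-th power norm of a one-sided
convolution.
Young's inequality (Hölder with weights `a m`, then Fubini and shift invariance) bounds it by
`(∑ m, a m)^p * ∑ i, u i^p`. The weight sum is the q-beta integral `B_q(α, 1 - 1/p) / (1 - q)`,
which the q-binomial theorem evaluates as a quotient of infinite q-Pochhammer symbols; in terms of
`Γ_q` this turns the constant into `(Γ_q(1-1/p) / Γ_q(α+1-1/p))^p`.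
-/

open scoped ENNReal

/-- The infinite q-Pochhammer symbol `(a; q)_∞ = ∏_{i≥0} (1 - a qⁱ)`. -/
noncomputable def qPochInf (a q : ℝ) : ℝ := ∏' i : ℕ, (1 - a * q ^ i)

/-- The q-Pochhammer symbol `(a; q)_β = (a;q)_∞ / (a q^β; q)_∞`. -/
noncomputable def qPoch (a q β : ℝ) : ℝ := qPochInf a q / qPochInf (a * q ^ β) q

/-- The q-gamma function `Γ_q(x) = (q;q)_∞ (1-q)^{1-x} / (q^x; q)_∞`. -/
noncomputable def qGamma (q x : ℝ) : ℝ :=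
  qPochInf q q * (1 - q) ^ (1 - x) / qPochInf (q ^ x) q

open Finset Filter Topology

section qPochInf

variable {q b : ℝ}

lemma one_sub_mul_pow_pos (hq0 : 0 ≤ q) (hq1 : q < 1) (hb : b < 1) (i : ℕ) :
    0 < 1 - b * q ^ i := by
  have hqi : q ^ i ≤ 1 := pow_le_one₀ hq0 hq1.le
  have hqi0 : 0 ≤ q ^ i := pow_nonneg hq0 i
  rcases le_or_gt b 0 with hb0 | hb0 <;> nlinarith

lemma summable_log_one_sub_mul_pow (hq0 : 0 ≤ q) (hq1 : q < 1) :
    Summable fun i : ℕ => Real.log (1 - b * q ^ i) := by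
  simpa [sub_eq_add_neg] using
    Real.summable_log_one_add_of_summable ((summable_geometric_of_lt_one hq0 hq1).mul_left (-b))

lemma hasProd_qPochInf (hq0 : 0 ≤ q) (hq1 : q < 1) (hb : b < 1) :
    HasProd (fun i : ℕ => 1 - b * q ^ i) (qPochInf b q) :=
  (Real.multipliable_of_summable_log (one_sub_mul_pow_pos hq0 hq1 hb)
    (summable_log_one_sub_mul_pow hq0 hq1)).hasProd

lemma qPochInf_eq_exp_tsum_log (hq0 : 0 ≤ q) (hq1 : q < 1) (hb : b < 1) :
    qPochInf b q = Real.exp (∑' i : ℕ, Real.log (1 - b * q ^ i)) :=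
  (Real.rexp_tsum_eq_tprod (one_sub_mul_pow_pos hq0 hq1 hb)
    (summable_log_one_sub_mul_pow hq0 hq1)).symm

lemma qPochInf_pos (hq0 : 0 ≤ q) (hq1 : q < 1) (hb : b < 1) : 0 < qPochInf b q := by
  rw [qPochInf_eq_exp_tsum_log hq0 hq1 hb]
  exact Real.exp_pos _

lemma qPochInf_le_qPochInf {b' : ℝ} (hq0 : 0 ≤ q) (hq1 : q < 1) (hbb' : b ≤ b')
    (hb' : b' < 1) : qPochInf b' q ≤ qPochInf b q := by
  rw [qPochInf_eq_exp_tsum_log hq0 hq1 hb', qPochInf_eq_exp_tsum_log hq0 hq1 (hbb'.trans_lt hb')]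
  refine Real.exp_le_exp.2 <| Summable.tsum_le_tsum (fun i => ?_)
    (summable_log_one_sub_mul_pow hq0 hq1) (summable_log_one_sub_mul_pow hq0 hq1)
  exact Real.log_le_log (one_sub_mul_pow_pos hq0 hq1 hb' i)
    (by nlinarith [pow_nonneg hq0 i])

lemma qPochInf_zero : qPochInf 0 q = 1 := by
  simp [qPochInf]

lemma qPochInf_eq_one_sub_mul (hq0 : 0 ≤ q) (hq1 : q < 1) (hb : b < 1) :
    qPochInf b q = (1 - b) * qPochInf (b * q) q := by
  have hbq : b * q < 1 := by linarith [pow_one q ▸ one_sub_mul_pow_pos hq0 hq1 hb 1]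
  have hshift : (fun i : ℕ => 1 - b * q ^ (i + 1)) = fun i => 1 - b * q * q ^ i := by
    ext i
    ring
  rw [qPochInf, tprod_eq_zero_mul', hshift, pow_zero, mul_one, qPochInf]
  simpa only [hshift] using (hasProd_qPochInf hq0 hq1 hbq).multipliable

end qPochInf

/-- The coefficient `(A;q)_m / (q;q)_m` of the q-binomial series, rescaled by
`(q;q)_∞ / (A;q)_∞`. -/
noncomputable def qBinomCoeff (A q : ℝ) (m : ℕ) : ℝ :=
  qPochInf (q ^ (m + 1)) q / qPochInf (A * q ^ m) q

section qBinomial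

variable {q A : ℝ}

lemma qBinomCoeff_pos (hq0 : 0 ≤ q) (hq1 : q < 1) (hA : A < 1) (m : ℕ) :
    0 < qBinomCoeff A q m :=
  div_pos (qPochInf_pos hq0 hq1 (pow_lt_one₀ hq0 hq1 m.succ_ne_zero))
    (qPochInf_pos hq0 hq1 (by linarith [one_sub_mul_pow_pos hq0 hq1 hA m]))

lemma qBinomCoeff_le (hq0 : 0 ≤ q) (hq1 : q < 1) (hA0 : 0 ≤ A) (hA1 : A < 1) (m : ℕ) :
    qBinomCoeff A q m ≤ 1 / qPochInf A q := by
  have hqm : q ^ m ≤ 1 := pow_le_one₀ hq0 hq1.le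
  have hAqm : A * q ^ m ≤ A := mul_le_of_le_one_right hA0 hqm
  have hnum : qPochInf (q ^ (m + 1)) q ≤ 1 :=
    qPochInf_zero (q := q) ▸ qPochInf_le_qPochInf hq0 hq1 (pow_nonneg hq0 _)
      (pow_lt_one₀ hq0 hq1 m.succ_ne_zero)
  have hden : qPochInf A q ≤ qPochInf (A * q ^ m) q :=
    qPochInf_le_qPochInf hq0 hq1 hAqm hA1
  exact div_le_div₀ zero_le_one hnum (qPochInf_pos hq0 hq1 hA1) hden

lemma qBinomCoeff_zero : qBinomCoeff A q 0 = qPochInf q q / qPochInf A q := by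
  simp [qBinomCoeff]

lemma one_sub_pow_mul_qBinomCoeff_succ (hq0 : 0 ≤ q) (hq1 : q < 1) (hA : A < 1) (m : ℕ) :
    (1 - q ^ (m + 1)) * qBinomCoeff A q (m + 1) = (1 - A * q ^ m) * qBinomCoeff A q m := by
  have hAqm : A * q ^ m < 1 := by linarith [one_sub_mul_pow_pos hq0 hq1 hA m]
  have hAqm' : A * q ^ (m + 1) < 1 := by linarith [one_sub_mul_pow_pos hq0 hq1 hA (m + 1)]
  have hden := qPochInf_pos hq0 hq1 hAqm'
  have hfac := one_sub_mul_pow_pos hq0 hq1 hA m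
  rw [qBinomCoeff, qBinomCoeff,
    qPochInf_eq_one_sub_mul hq0 hq1 (pow_lt_one₀ hq0 hq1 m.succ_ne_zero),
    qPochInf_eq_one_sub_mul hq0 hq1 hAqm, ← pow_succ, mul_assoc, ← pow_succ]
  field_simp

lemma summable_qBinomCoeff_mul_pow (hq0 : 0 ≤ q) (hq1 : q < 1) (hA0 : 0 ≤ A) (hA1 : A < 1)
    {z : ℝ} (hz0 : 0 ≤ z) (hz1 : z < 1) :
    Summable fun m => qBinomCoeff A q m * z ^ m :=
  Summable.of_nonneg_of_le (fun m => by positivity [qBinomCoeff_pos hq0 hq1 hA1 m])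
    (fun m => mul_le_mul_of_nonneg_right (qBinomCoeff_le hq0 hq1 hA0 hA1 m) (pow_nonneg hz0 m))
    ((summable_geometric_of_lt_one hz0 hz1).mul_left _)

lemma qBinomial_functional_equation (hq0 : 0 ≤ q) (hq1 : q < 1) (hA0 : 0 ≤ A) (hA1 : A < 1)
    {z : ℝ} (hz0 : 0 ≤ z) (hz1 : z < 1) :
    (1 - z) * ∑' m, qBinomCoeff A q m * z ^ m
      = (1 - A * z) * ∑' m, qBinomCoeff A q m * (q * z) ^ m := by
  set F := ∑' m, qBinomCoeff A q m * z ^ m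
  set G := ∑' m, qBinomCoeff A q m * (q * z) ^ m
  have hF := (summable_qBinomCoeff_mul_pow hq0 hq1 hA0 hA1 hz0 hz1).hasSum
  have hG := (summable_qBinomCoeff_mul_pow hq0 hq1 hA0 hA1 (by positivity)
    (lt_of_le_of_lt (mul_le_of_le_one_left hz0 hq1.le) hz1)).hasSum
  -- the coefficients of `F - G` and of `z * (F - A * G)` agree after a shift by one
  have hshift := (hasSum_nat_add_iff' 1).2 (hF.sub hG)
  have hzF := (hF.sub (hG.mul_left A)).mul_left z
  have heq : F - G - ∑ i ∈ range 1,
      (qBinomCoeff A q i * z ^ i - qBinomCoeff A q i * (q * z) ^ i) = z * (F - A * G) := by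
    refine hshift.unique (hzF.congr_fun fun m => ?_)
    linear_combination z ^ (m + 1) * one_sub_pow_mul_qBinomCoeff_succ hq0 hq1 hA1 m
  simp only [range_one, sum_singleton, pow_zero, mul_one, sub_self, sub_zero] at heq
  linear_combination heq

lemma prod_mul_tsum_qBinomCoeff_mul_pow (hq0 : 0 ≤ q) (hq1 : q < 1) (hA0 : 0 ≤ A) (hA1 : A < 1)
    {z : ℝ} (hz0 : 0 ≤ z) (hz1 : z < 1) (n : ℕ) :
    (∏ i ∈ range n, (1 - z * q ^ i)) * ∑' m, qBinomCoeff A q m * z ^ m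
      = (∏ i ∈ range n, (1 - A * z * q ^ i)) * ∑' m, qBinomCoeff A q m * (q ^ n * z) ^ m := by
  induction n with
  | zero => simp
  | succ n ih =>
    have hFE := qBinomial_functional_equation hq0 hq1 hA0 hA1 (z := q ^ n * z) (by positivity)
      (lt_of_le_of_lt (mul_le_of_le_one_left hz0 (pow_le_one₀ hq0 hq1.le)) hz1)
    rw [← mul_assoc q, ← pow_succ'] at hFE
    rw [prod_range_succ, prod_range_succ]
    linear_combination (1 - z * q ^ n) * ih + (∏ i ∈ range n, (1 - A * z * q ^ i)) * hFE

lemma tendsto_tsum_qBinomCoeff_mul_pow_mul (hq0 : 0 ≤ q) (hq1 : q < 1) (hA0 : 0 ≤ A)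
    (hA1 : A < 1) {z : ℝ} (hz0 : 0 ≤ z) (hz1 : z < 1) :
    Tendsto (fun n : ℕ => ∑' m, qBinomCoeff A q m * (q ^ n * z) ^ m) atTop
      (𝓝 (qPochInf q q / qPochInf A q)) := by
  have hlim : Tendsto (fun n : ℕ => ∑' m, qBinomCoeff A q m * (q ^ n * z) ^ m) atTop
      (𝓝 (∑' m, qBinomCoeff A q m * (0 * z) ^ m)) := by
    refine tendsto_tsum_of_dominated_convergence
      (summable_qBinomCoeff_mul_pow hq0 hq1 hA0 hA1 hz0 hz1) (fun m => ?_)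
      (Eventually.of_forall fun n m => ?_)
    · exact ((tendsto_pow_atTop_nhds_zero_of_lt_one hq0 hq1).mul_const z).pow m |>.const_mul _
    · rw [Real.norm_of_nonneg (by positivity [qBinomCoeff_pos hq0 hq1 hA1 m])]
      gcongr
      · exact (qBinomCoeff_pos hq0 hq1 hA1 m).le
      · exact mul_le_of_le_one_left hz0 (pow_le_one₀ hq0 hq1.le)
  rwa [tsum_eq_single 0 fun m hm => by simp [hm], pow_zero, mul_one, qBinomCoeff_zero] at hlim

/-- The q-binomial theorem. -/
theorem tsum_qBinomCoeff_mul_pow (hq0 : 0 ≤ q) (hq1 : q < 1) (hA0 : 0 ≤ A) (hA1 : A < 1)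
    {z : ℝ} (hz0 : 0 ≤ z) (hz1 : z < 1) :
    ∑' m, qBinomCoeff A q m * z ^ m
      = qPochInf q q * qPochInf (A * z) q / (qPochInf A q * qPochInf z q) := by
  have hAz : A * z < 1 := lt_of_le_of_lt (mul_le_of_le_one_left hz0 hA1.le) hz1
  have hlim_left := ((hasProd_qPochInf hq0 hq1 hz1).tendsto_prod_nat).mul_const
    (∑' m, qBinomCoeff A q m * z ^ m)
  have hlim_right := ((hasProd_qPochInf hq0 hq1 hAz).tendsto_prod_nat).mul
    (tendsto_tsum_qBinomCoeff_mul_pow_mul hq0 hq1 hA0 hA1 hz0 hz1)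
  simp_rw [← prod_mul_tsum_qBinomCoeff_mul_pow hq0 hq1 hA0 hA1 hz0 hz1] at hlim_right
  have := tendsto_nhds_unique hlim_left hlim_right
  have hPz := qPochInf_pos hq0 hq1 hz1
  have hPA := qPochInf_pos hq0 hq1 hA1
  field_simp at this ⊢
  linear_combination this

end qBinomial

lemma qGamma_pos {q x : ℝ} (hq : 0 < q) (hq1 : q < 1) (hx : 0 < x) : 0 < qGamma q x := by
  have := qPochInf_pos hq.le hq1 hq1
  have := qPochInf_pos hq.le hq1 (Real.rpow_lt_one hq.le hq1 hx)
  rw [qGamma]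
  positivity

lemma qPoch_rpow_succ_eq_qBinomCoeff {q α : ℝ} (hq : 0 < q) (m : ℕ) :
    qPoch (q ^ ((m : ℝ) + 1)) q (α - 1) = qBinomCoeff (q ^ α) q m := by
  have hsucc : q ^ ((m : ℝ) + 1) = q ^ (m + 1) := by
    rw [← Real.rpow_natCast]
    push_cast
    rfl
  have hshift : q ^ ((m : ℝ) + 1) * q ^ (α - 1) = q ^ α * q ^ m := by
    rw [← Real.rpow_natCast, ← Real.rpow_add hq, ← Real.rpow_add hq]
    ring_nf
  rw [qPoch, hshift, hsucc, qBinomCoeff]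

/-- `(1 - q)` times this series is the q-beta integral
`∫₀¹ t^(s-1) (tq;q)_(α-1) d_q t = Γ_q(α) Γ_q(s) / Γ_q(α+s)`. -/
theorem hasSum_qBeta {q α s : ℝ} (hq : 0 < q) (hq1 : q < 1) (hα : 0 < α) (hs : 0 < s) :
    HasSum (fun m : ℕ => qPoch (q ^ ((m : ℝ) + 1)) q (α - 1) * q ^ ((m : ℝ) * s))
      (qGamma q α / (1 - q) * (qGamma q s / qGamma q (α + s))) := by
  have hA1 : q ^ α < 1 := Real.rpow_lt_one hq.le hq1 hα
  have hZ1 : q ^ s < 1 := Real.rpow_lt_one hq.le hq1 hs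
  have hAZ1 : q ^ α * q ^ s < 1 := by
    rw [← Real.rpow_add hq]
    exact Real.rpow_lt_one hq.le hq1 (add_pos hα hs)
  have hterm : ∀ m : ℕ, qPoch (q ^ ((m : ℝ) + 1)) q (α - 1) * q ^ ((m : ℝ) * s)
      = qBinomCoeff (q ^ α) q m * (q ^ s) ^ m := fun m => by
    rw [qPoch_rpow_succ_eq_qBinomCoeff hq, mul_comm (m : ℝ), Real.rpow_mul hq.le,
      Real.rpow_natCast]
  simp_rw [hterm]
  convert (summable_qBinomCoeff_mul_pow hq.le hq1 (by positivity) hA1 (by positivity) hZ1).hasSum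
    using 1
  have h1q : 0 < 1 - q := by linarith
  have hexp : (1 - q) ^ (1 - α) * (1 - q) ^ (1 - s) = (1 - q) * (1 - q) ^ (1 - (α + s)) := by
    rw [← Real.rpow_add h1q, show 1 - α + (1 - s) = 1 + (1 - (α + s)) by ring,
      Real.rpow_add h1q, Real.rpow_one]
  have := qPochInf_pos hq.le hq1 hq1
  have := qPochInf_pos hq.le hq1 hA1
  have := qPochInf_pos hq.le hq1 hZ1
  have := qPochInf_pos hq.le hq1 hAZ1
  rw [tsum_qBinomCoeff_mul_pow hq.le hq1 (by positivity) hA1 (by positivity) hZ1, qGamma, qGamma,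
    qGamma, Real.rpow_add hq]
  field_simp
  linear_combination hexp

namespace ENNReal

lemma inner_le_weight_mul_Lp_tsum {ι : Type*} {p : ℝ} (hp : 1 ≤ p) (w f : ι → ℝ≥0∞) :
    ∑' i, w i * f i ≤ (∑' i, w i) ^ (1 - p⁻¹) * (∑' i, w i * f i ^ p) ^ p⁻¹ := by
  refine ENNReal.summable.tsum_le_of_sum_le fun s => ?_
  calc ∑ i ∈ s, w i * f i
      ≤ (∑ i ∈ s, w i) ^ (1 - p⁻¹) * (∑ i ∈ s, w i * f i ^ p) ^ p⁻¹ :=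
        inner_le_weight_mul_Lp_of_nonneg s hp w f
    _ ≤ (∑' i, w i) ^ (1 - p⁻¹) * (∑' i, w i * f i ^ p) ^ p⁻¹ := by
        gcongr
        · exact sub_nonneg.2 (inv_le_one_of_one_le₀ hp)
        all_goals exact ENNReal.sum_le_tsum s

lemma rpow_tsum_mul_le_weight_mul_tsum {ι : Type*} {p : ℝ} (hp : 1 ≤ p)
    (w f : ι → ℝ≥0∞) :
    (∑' i, w i * f i) ^ p ≤ (∑' i, w i) ^ (p - 1) * ∑' i, w i * f i ^ p := by
  have hp0 : 0 < p := by linarith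
  calc (∑' i, w i * f i) ^ p
      ≤ ((∑' i, w i) ^ (1 - p⁻¹) * (∑' i, w i * f i ^ p) ^ p⁻¹) ^ p :=
        ENNReal.rpow_le_rpow (inner_le_weight_mul_Lp_tsum hp w f) hp0.le
    _ = (∑' i, w i) ^ (p - 1) * ∑' i, w i * f i ^ p := by
        rw [ENNReal.mul_rpow_of_nonneg _ _ hp0.le, ← ENNReal.rpow_mul, ← ENNReal.rpow_mul,
          inv_mul_cancel₀ hp0.ne', ENNReal.rpow_one, sub_mul, one_mul, inv_mul_cancel₀ hp0.ne']

/-- Young's inequality `‖a ⋆ u‖_p ≤ ‖a‖_1 ‖u‖_p`. -/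
theorem tsum_rpow_tsum_mul_add_le {ι G : Type*} [AddGroup G] {p : ℝ} (hp : 1 ≤ p)
    (a : ι → ℝ≥0∞) (e : ι → G) (u : G → ℝ≥0∞) :
    ∑' j, (∑' m, a m * u (j + e m)) ^ p ≤ (∑' m, a m) ^ p * ∑' i, u i ^ p := by
  have hpow : (∑' m, a m) ^ (p - 1) * ∑' m, a m = (∑' m, a m) ^ p := by
    nth_rw 2 [← ENNReal.rpow_one (∑' m, a m)]
    rw [← ENNReal.rpow_add_of_nonneg _ _ (by linarith) zero_le_one, sub_add_cancel]
  calc ∑' j, (∑' m, a m * u (j + e m)) ^ p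
      ≤ ∑' j, (∑' m, a m) ^ (p - 1) * ∑' m, a m * u (j + e m) ^ p :=
        ENNReal.tsum_le_tsum fun j => rpow_tsum_mul_le_weight_mul_tsum hp _ _
    _ = (∑' m, a m) ^ (p - 1) * ∑' m, a m * ∑' j, u (j + e m) ^ p := by
        rw [ENNReal.tsum_mul_left, ENNReal.tsum_comm]
        simp_rw [ENNReal.tsum_mul_left]
    _ = (∑' m, a m) ^ p * ∑' i, u i ^ p := by
        have hshift (m : ι) : ∑' j, u (j + e m) ^ p = ∑' i, u i ^ p :=
          (Equiv.addRight (e m)).tsum_eq fun i => u i ^ p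
        simp_rw [hshift]
        rw [ENNReal.tsum_mul_right, ← mul_assoc, hpow]

lemma rpow_mul_tsum_mul_rpow {x : ℝ≥0∞} (hx0 : x ≠ 0) (hxt : x ≠ ⊤) {p : ℝ}
    (hp : 0 < p) (t : ℝ) (g h : ℕ → ℝ≥0∞) :
    x ^ (t * (1 - p)) * (∑' m : ℕ, g m * h m * x ^ (t + m)) ^ p
      = (∑' m : ℕ, g m * x ^ ((m : ℝ) * (1 - 1 / p)) * (x ^ ((t + m) / p) * h m)) ^ p := by
  have hexp (m : ℕ) :
      x ^ (t * (1 - p) / p) * x ^ (t + m) = x ^ ((m : ℝ) * (1 - 1 / p)) * x ^ ((t + m) / p) := by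
    rw [← ENNReal.rpow_add _ _ hx0 hxt, ← ENNReal.rpow_add _ _ hx0 hxt]
    congr 1
    field_simp
    ring
  have hpow : x ^ (t * (1 - p)) = (x ^ (t * (1 - p) / p)) ^ p := by
    rw [← ENNReal.rpow_mul, div_mul_cancel₀ _ hp.ne']
  rw [hpow, ← ENNReal.mul_rpow_of_nonneg _ _ hp.le, ← ENNReal.tsum_mul_left]
  congr 1
  refine tsum_congr fun m => ?_
  rw [mul_comm, mul_assoc, mul_comm (x ^ (t + m)), hexp]
  ring

lemma ofReal_rpow_add_one_div_rpow_mul_ofReal_rpow {c g r p : ℝ} (hc : 0 < c)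
    (hg : 0 < g) (hr : 0 ≤ r) (hp : 0 ≤ p) :
    ENNReal.ofReal (c ^ (p + 1) / g ^ p) * ENNReal.ofReal (g / c * r) ^ p
      = ENNReal.ofReal (r ^ p * c) := by
  rw [ENNReal.ofReal_rpow_of_nonneg (by positivity) hp, ← ENNReal.ofReal_mul (by positivity),
    Real.mul_rpow (by positivity) hr, Real.div_rpow hg.le hc.le, Real.rpow_add_one hc.ne']
  congr 1
  field_simp

end ENNReal

theorem q_riemann_liouville (q p α : ℝ) (hq : 0 < q) (hq1 : q < 1) (hp : 1 < p)
    (hα : 0 < α) (f : ℝ → ℝ≥0∞) :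
    ENNReal.ofReal ((1 - q) ^ (p + 1) / (qGamma q α) ^ p) *
        ∑' j : ℤ, (ENNReal.ofReal q) ^ ((j : ℝ) * (1 - p)) *
          (∑' m : ℕ, ENNReal.ofReal (qPoch (q ^ ((m : ℝ) + 1)) q (α - 1)) *
            f (q ^ ((j : ℝ) + (m : ℝ))) * (ENNReal.ofReal q) ^ ((j : ℝ) + (m : ℝ))) ^ p
      ≤ ENNReal.ofReal ((qGamma q (1 - 1 / p) / qGamma q (α + 1 - 1 / p)) ^ p * (1 - q)) *
        ∑' i : ℤ, (ENNReal.ofReal q) ^ (i : ℝ) * (f (q ^ (i : ℝ))) ^ p := by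
  have hp0 : 0 < p := by linarith
  have hs : 0 < 1 - 1 / p := by rw [sub_pos, div_lt_one hp0]; exact hp
  have hQ0 : ENNReal.ofReal q ≠ 0 := (ENNReal.ofReal_pos.2 hq).ne'
  set Q := ENNReal.ofReal q
  set a : ℕ → ℝ≥0∞ := fun m =>
    ENNReal.ofReal (qPoch (q ^ ((m : ℝ) + 1)) q (α - 1)) * Q ^ ((m : ℝ) * (1 - 1 / p))
  set u : ℤ → ℝ≥0∞ := fun i => Q ^ ((i : ℝ) / p) * f (q ^ (i : ℝ))
  have h_term (j : ℤ) : Q ^ ((j : ℝ) * (1 - p)) *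
      (∑' m : ℕ, ENNReal.ofReal (qPoch (q ^ ((m : ℝ) + 1)) q (α - 1)) *
        f (q ^ ((j : ℝ) + (m : ℝ))) * Q ^ ((j : ℝ) + (m : ℝ))) ^ p
      = (∑' m : ℕ, a m * u (j + m)) ^ p := by
    rw [ENNReal.rpow_mul_tsum_mul_rpow hQ0 ENNReal.ofReal_ne_top hp0]
    simp only [a, u]
    push_cast
    rfl
  have h_a : ∑' m, a m = ENNReal.ofReal
      (qGamma q α / (1 - q) * (qGamma q (1 - 1 / p) / qGamma q (α + (1 - 1 / p)))) := by
    have hc := hasSum_qBeta hq hq1 hα hs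
    have hc0 (m : ℕ) : 0 ≤ qPoch (q ^ ((m : ℝ) + 1)) q (α - 1) := by
      rw [qPoch_rpow_succ_eq_qBinomCoeff hq]
      exact (qBinomCoeff_pos hq.le hq1 (Real.rpow_lt_one hq.le hq1 hα) m).le
    rw [← hc.tsum_eq, ENNReal.ofReal_tsum_of_nonneg (fun m => by positivity [hc0 m]) hc.summable]
    refine tsum_congr fun m => ?_
    rw [ENNReal.ofReal_mul (hc0 m), ← ENNReal.ofReal_rpow_of_pos hq]
  have h_u (i : ℤ) : u i ^ p = Q ^ (i : ℝ) * f (q ^ (i : ℝ)) ^ p := by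
    rw [ENNReal.mul_rpow_of_nonneg _ _ hp0.le, ← ENNReal.rpow_mul, div_mul_cancel₀ _ hp0.ne']
  calc _ = ENNReal.ofReal ((1 - q) ^ (p + 1) / (qGamma q α) ^ p) *
        ∑' j : ℤ, (∑' m : ℕ, a m * u (j + m)) ^ p := by simp_rw [h_term]
    _ ≤ ENNReal.ofReal ((1 - q) ^ (p + 1) / (qGamma q α) ^ p) *
        ((∑' m, a m) ^ p * ∑' i, u i ^ p) := by
      gcongr
      exact ENNReal.tsum_rpow_tsum_mul_add_le hp.le a (fun m : ℕ => (m : ℤ)) u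
    _ = _ := by
      rw [h_a, ← mul_assoc, add_sub_assoc, ENNReal.ofReal_rpow_add_one_div_rpow_mul_ofReal_rpow
        (by linarith) (qGamma_pos hq hq1 hα)
        (div_nonneg (qGamma_pos hq hq1 hs).le (qGamma_pos hq hq1 (add_pos hα hs)).le) hp0.le]
      simp_rw [h_u]
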